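/- arXiv:2205.02374 — 3 statements merged into one kernel-verified Lean document; each statement's English description precedes it below -/
import Mathlib

section
/- (Upper bound for majority) There exists a constant C > 0 such that for all integers n ≥ k ≥ 2, the k-composition complexity of the majority function satisfies CC_k(Maj_n) ≤ C · (n/k) · log₂ k. Concretely, one may take m = ⌈n/k⌉ · ⌈log₂(k+1)⌉ inner functions: split the variables into ⌈n/k⌉ groups of at most k variables, let ⌈log₂(k+1)⌉ inner functions output the binary digits of the Hamming weight of each group, and let h reconstruct the total Hamming weight and compare it with n/2. -/
/-- The Hamming weight of `x ∈ {0,1}^n`: the number of coordinates equal to `1`. -/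
def hw (n : ℕ) (x : Fin n → Bool) : ℕ := (Finset.univ.filter (fun i => x i = true)).card

/-- The majority function `Maj_n`: outputs `1` iff the Hamming weight is at least `n/2`. -/
def maj (n : ℕ) (x : Fin n → Bool) : Bool := decide (n ≤ 2 * hw n x)

/-- `g : {0,1}^n → {0,1}` is `k`-local if it depends on at most `k` coordinates. -/
def IsKLocal {n : ℕ} (k : ℕ) (g : (Fin n → Bool) → Bool) : Prop :=
  ∃ I : Finset (Fin n), I.card ≤ k ∧
    ∀ x y : Fin n → Bool, (∀ i ∈ I, x i = y i) → g x = g y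

/-- The `k`-composition complexity of `f : {0,1}^n → D`: the least `m` such that
`f = h(g_1, …, g_m)` with each `g_j` being `k`-local. -/
noncomputable def CCk {n : ℕ} {D : Type*} (k : ℕ) (f : (Fin n → Bool) → D) : ℕ :=
  sInf {m : ℕ | ∃ (g : Fin m → (Fin n → Bool) → Bool) (h : (Fin m → Bool) → D),
    (∀ j, IsKLocal k (g j)) ∧ ∀ x, f x = h (fun j => g j x)}

/-!
Split the `n` coordinates into `⌈n/k⌉` blocks of at most `k` consecutive coordinates. The Hamming
weight of a block takes at most `k + 1 ≤ 2 ^ B` values, `B = ⌈log₂ (k + 1)⌉`, so it is encoded by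
`B` bits, each a `k`-local function. The outer function decodes the block weights, adds them up and
compares the sum with `n / 2`. Finally `⌈n/k⌉ ≤ 2n/k` and `⌈log₂ (k + 1)⌉ ≤ 4 log₂ k` give `C = 8`.
-/

open Finset Function

lemma isKLocal_comp_of_dependsOn {n k : ℕ} {α : Type*} {u : (Fin n → Bool) → α}
    {I : Finset (Fin n)} (hI : #I ≤ k) (hu : DependsOn u I) (φ : α → Bool) :
    IsKLocal k (φ ∘ u) :=
  ⟨I, hI, fun _ _ hxy => congrArg φ (hu hxy)⟩

lemma CCk_le_card {n k : ℕ} {D ι : Type*} [Fintype ι] {f : (Fin n → Bool) → D}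
    (g : ι → (Fin n → Bool) → Bool) (h : (ι → Bool) → D)
    (hg : ∀ j, IsKLocal k (g j)) (hf : ∀ x, f x = h fun j => g j x) :
    CCk k f ≤ Fintype.card ι := by
  let e := Fintype.equivFin ι
  exact Nat.sInf_le ⟨fun j => g (e.symm j), fun v => h fun i => v (e i), fun j => hg _,
    fun x => by simp [hf x]⟩

/-- An injection `α ↪ (Fin B → Bool)` splits each statistic `u a` into `B` bits, each depending
on the same coordinates as `u a`. -/
lemma CCk_le_card_mul {n k B : ℕ} {D ι α : Type*} [Fintype ι] [Fintype α] [Nonempty α]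
    {f : (Fin n → Bool) → D} (u : ι → (Fin n → Bool) → α) (F : (ι → α) → D)
    (hu : ∀ a, ∃ I : Finset (Fin n), #I ≤ k ∧ DependsOn (u a) I)
    (hα : Fintype.card α ≤ 2 ^ B) (hf : ∀ x, f x = F fun a => u a x) :
    CCk k f ≤ Fintype.card ι * B := by
  obtain ⟨e⟩ : Nonempty (α ↪ (Fin B → Bool)) := Embedding.nonempty_of_card_le (by simpa)
  have hlocal (p : ι × Fin B) : IsKLocal k fun x => e (u p.1 x) p.2 := by
    obtain ⟨I, hI, hIu⟩ := hu p.1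
    exact isKLocal_comp_of_dependsOn hI hIu fun y => e y p.2
  calc CCk k f ≤ Fintype.card (ι × Fin B) :=
        CCk_le_card _ (fun v => F fun a => invFun e fun b => v (a, b)) hlocal
          fun x => by simp only [leftInverse_invFun e.injective _, hf x]
    _ = Fintype.card ι * B := by simp

section Fibers

variable {n : ℕ} {ι : Type*} [DecidableEq ι] (π : Fin n → ι)

def fiberWeight (a : ι) (x : Fin n → Bool) : ℕ := #{i | x i = true ∧ π i = a}

lemma hw_eq_sum_fiberWeight [Fintype ι] (x : Fin n → Bool) :
    hw n x = ∑ a, fiberWeight π a x := by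
  simp only [hw, fiberWeight, ← filter_filter]
  exact card_eq_sum_card_fiberwise fun _ _ => mem_univ _

lemma fiberWeight_le (a : ι) (x : Fin n → Bool) : fiberWeight π a x ≤ #{i | π i = a} :=
  card_le_card <| monotone_filter_right _ fun _ _ => And.right

lemma dependsOn_fiberWeight (a : ι) :
    DependsOn (fiberWeight π a) ({i | π i = a} : Finset (Fin n)) := by
  intro x y hxy
  simp only [fiberWeight]
  congr 1
  ext i
  simp only [mem_filter, mem_univ, true_and, and_congr_left_iff]
  intro hi
  rw [hxy i (by simpa using hi)]

end Fibers

/-- The blocks are the rows of `Fin n ↪ Fin (G * k) ≃ Fin G × Fin k`. -/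
lemma exists_fiber_card_le {n G k : ℕ} (h : n ≤ G * k) :
    ∃ π : Fin n → Fin G, ∀ a, #{i | π i = a} ≤ k := by
  let e : Fin n → Fin G × Fin k := fun i => finProdFinEquiv.symm (Fin.castLE h i)
  have he : Injective e := finProdFinEquiv.symm.injective.comp (Fin.castLE_injective h)
  refine ⟨fun i => (e i).1, fun a => ?_⟩
  calc #{i | (e i).1 = a} ≤ #(univ : Finset (Fin k)) :=
        card_le_card_of_injOn (fun i => (e i).2) (fun _ _ => mem_coe.2 (mem_univ _))
          fun i hi j hj hij => he (Prod.ext (by simp_all) hij)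
    _ = k := by simp

lemma CCk_maj_le {n k B : ℕ} {ι : Type*} [Fintype ι] [DecidableEq ι] (π : Fin n → ι)
    (hπ : ∀ a, #{i | π i = a} ≤ k) (hB : k < 2 ^ B) : CCk k (maj n) ≤ Fintype.card ι * B :=
  CCk_le_card_mul (α := Fin (k + 1))
    (fun a x => ⟨fiberWeight π a x, Nat.lt_succ_of_le ((fiberWeight_le π a x).trans (hπ a))⟩)
    (fun w => decide (n ≤ 2 * ∑ a, (w a : ℕ)))
    (fun a => ⟨_, hπ a, fun _ _ hxy => Fin.ext (dependsOn_fiberWeight π a hxy)⟩)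
    (by simpa using hB) fun x => by simp [maj, hw_eq_sum_fiberWeight π]

lemma le_natCeil_div_mul (n : ℕ) {k : ℕ} (hk : 0 < k) : n ≤ ⌈(n : ℝ) / k⌉₊ * k := by
  have : (n : ℝ) ≤ ⌈(n : ℝ) / k⌉₊ * k := (div_le_iff₀ (by positivity)).1 (Nat.le_ceil _)
  exact_mod_cast this

lemma lt_two_pow_natCeil_logb (k : ℕ) : k < 2 ^ ⌈Real.logb 2 ((k : ℝ) + 1)⌉₊ := by
  have := Nat.le_pow_clog one_lt_two (k + 1)
  rw [← Real.natCeil_logb_natCast] at this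
  push_cast at this
  omega

lemma logb_two_add_one_le {k : ℝ} (hk : 2 ≤ k) : Real.logb 2 (k + 1) ≤ 2 * Real.logb 2 k := by
  calc Real.logb 2 (k + 1) ≤ Real.logb 2 (k * k) :=
        Real.logb_le_logb_of_le one_lt_two (by positivity) (by nlinarith)
    _ = 2 * Real.logb 2 k := by rw [Real.logb_mul (by positivity) (by positivity)]; ring

lemma natCeil_div_mul_natCeil_logb_le {n k : ℕ} (hk : 2 ≤ k) (hkn : k ≤ n) :
    ((⌈(n : ℝ) / k⌉₊ * ⌈Real.logb 2 ((k : ℝ) + 1)⌉₊ : ℕ) : ℝ)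
      ≤ 8 * ((n : ℝ) / k) * Real.logb 2 k := by
  have hk' : (2 : ℝ) ≤ k := by exact_mod_cast hk
  have hnk : 1 ≤ (n : ℝ) / k := (one_le_div (by positivity)).2 (by exact_mod_cast hkn)
  have hlog : 1 ≤ Real.logb 2 ((k : ℝ) + 1) :=
    (Real.le_logb_iff_rpow_le one_lt_two (by positivity)).2 (by norm_num; linarith)
  push_cast
  calc (⌈(n : ℝ) / k⌉₊ : ℝ) * ⌈Real.logb 2 ((k : ℝ) + 1)⌉₊
      ≤ (2 * ((n : ℝ) / k)) * (2 * (2 * Real.logb 2 k)) := by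
        gcongr
        · exact Nat.ceil_le_two_mul (by linarith)
        · exact (Nat.ceil_le_two_mul (by linarith)).trans (by gcongr; exact logb_two_add_one_le hk')
    _ = 8 * ((n : ℝ) / k) * Real.logb 2 k := by ring

/-- Upper bound for majority: `CC_k(Maj_n) ≤ ⌈n/k⌉ ⬝ ⌈log₂(k+1)⌉ ≤ C ⬝ (n/k) ⬝ log₂ k`. -/
theorem maj_upper_bound :
    ∃ C : ℝ, 0 < C ∧
      ∀ n k : ℕ, 2 ≤ k → k ≤ n →
        CCk k (maj n) ≤ ⌈(n : ℝ) / (k : ℝ)⌉₊ * ⌈Real.logb 2 ((k : ℝ) + 1)⌉₊ ∧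
        (CCk k (maj n) : ℝ) ≤ C * ((n : ℝ) / (k : ℝ)) * Real.logb 2 (k : ℝ) := by
  refine ⟨8, by norm_num, fun n k hk hkn => ?_⟩
  obtain ⟨π, hπ⟩ := exists_fiber_card_le (le_natCeil_div_mul n (by omega : 0 < k))
  have hCC := CCk_maj_le π hπ (lt_two_pow_natCeil_logb k)
  rw [Fintype.card_fin] at hCC
  exact ⟨hCC, (Nat.cast_le.2 hCC).trans (natCeil_div_mul_natCeil_logb_le hk hkn)⟩
end

section
/- (Key lemma) There exists a constant C > 0 such that the following holds. Suppose HW_n(x) = h(g_1(x), …, g_m(x)) for all x ∈ {0,1}^n, where g_1, …, g_m : {0,1}^n → {0,1} and h : {0,1}^m → {0, …, n}, and suppose at most q of the inner functions g_1, …, g_m depend on coordinate i. Let X be uniformly distributed on {0,1}^n. Then the mutual information satisfies I[X_i : (g_1(X), …, g_m(X))] ≥ 2^(−C·q). -/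
/-- `x^{⊕i}`: `x` with its `i`-th coordinate flipped. -/
def flipBit {n : ℕ} (i : Fin n) (x : Fin n → Bool) : Fin n → Bool :=
  Function.update x i (!x i)

/-- `g` depends on coordinate `i` if flipping that coordinate can change its output. -/
def DependsOnCoord {n : ℕ} (g : (Fin n → Bool) → Bool) (i : Fin n) : Prop :=
  ∃ x, g x ≠ g (flipBit i x)

/-- The Shannon entropy (base 2) of the random variable `A : Ω → α`, where the underlying
sample point is drawn uniformly from the finite set `S`.  (The convention `0 ⬝ log₂ 0 = 0`
holds automatically since `Real.logb 2 0 = 0`.) -/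
noncomputable def entU {Ω α : Type*} [Fintype α] [DecidableEq α]
    (S : Finset Ω) (A : Ω → α) : ℝ :=
  ∑ a : α,
    (((S.filter (fun ω => A ω = a)).card : ℝ) / (S.card : ℝ)) *
      Real.logb 2 ((((S.filter (fun ω => A ω = a)).card : ℝ) / (S.card : ℝ)))⁻¹

/-- The conditional Shannon entropy (base 2) `H[A | B]` of `A : Ω → α` given `B : Ω → β`,
where the sample point is uniform on the finite set `S`.  Each term is
`P(a, b) ⬝ log₂ (1 / P(a | b))`, and `1 / P(a | b) = P(b) / P(a, b)`. -/
noncomputable def condEntU {Ω α β : Type*} [Fintype α] [DecidableEq α]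
    [Fintype β] [DecidableEq β] (S : Finset Ω) (A : Ω → α) (B : Ω → β) : ℝ :=
  ∑ a : α, ∑ b : β,
    (((S.filter (fun ω => A ω = a ∧ B ω = b)).card : ℝ) / (S.card : ℝ)) *
      Real.logb 2 (((S.filter (fun ω => B ω = b)).card : ℝ) /
        ((S.filter (fun ω => A ω = a ∧ B ω = b)).card : ℝ))

/-- The mutual information (base 2) `I[A : B] = H[A] − H[A | B]`, where the sample point is
uniform on the finite set `S`. -/
noncomputable def mutInfoU {Ω α β : Type*} [Fintype α] [DecidableEq α]
    [Fintype β] [DecidableEq β] (S : Finset Ω) (A : Ω → α) (B : Ω → β) : ℝ :=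
  entU S A - condEntU S A B

section KeyLemmaAux
open Finset Real

lemma gibbs' {a c : ℝ} (ha : 0 ≤ a) (hc : 0 < c) : a - c ≤ a * Real.log (a / c) := by
  rcases eq_or_lt_of_le ha with h | h
  · simp [← h]; linarith
  · have h1 : Real.log (c / a) ≤ c / a - 1 := Real.log_le_sub_one_of_pos (by positivity)
    have h2 : Real.log (c / a) = - Real.log (a / c) := by
      rw [← Real.log_inv]; congr 1; field_simp
    have h3 : 1 - c / a ≤ Real.log (a / c) := by linarith
    have h4 := mul_le_mul_of_nonneg_left h3 ha
    have h5 : a * (1 - c / a) = a - c := by field_simp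
    linarith

lemma log_ineq_low {b c : ℝ} (hb : 0 < b) (hbc : b ≤ c) :
    (c - b) ^ 2 / (2 * c) ≤ b * Real.log (b / c) + c - b := by
  have hc : 0 < c := lt_of_lt_of_le hb hbc
  set F : ℝ → ℝ := fun t => t * Real.log t - t * Real.log c + c - t - (c - t) ^ 2 / (2 * c)
    with hF
  have hderiv : ∀ t ∈ Set.Ioo b c, HasDerivAt F (Real.log t - Real.log c + (c - t) / c) t := by
    intro t ht
    have ht0 : (0:ℝ) < t := lt_trans hb ht.1
    have h1 : HasDerivAt (fun t : ℝ => t * Real.log t) (Real.log t + 1) t :=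
      Real.hasDerivAt_mul_log ht0.ne'
    have h2 : HasDerivAt (fun t : ℝ => t * Real.log c) (Real.log c) t := by
      simpa using (hasDerivAt_id t).mul_const (Real.log c)
    have h3 : HasDerivAt (fun t : ℝ => (c - t) ^ 2 / (2 * c)) ((2 * (c - t) * (-1)) / (2 * c)) t := by
      have : HasDerivAt (fun t : ℝ => (c - t) ^ 2) (2 * (c - t) ^ 1 * (0 - 1)) t := by
        exact ((hasDerivAt_const t c).sub (hasDerivAt_id t)).pow 2
      simpa using this.div_const (2 * c)
    have := ((h1.sub h2).add_const c).sub (hasDerivAt_id t) |>.sub h3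
    refine HasDerivAt.congr_deriv this ?_
    ring
  have hcont : ContinuousOn F (Set.Icc b c) := by
    have : ContinuousOn (fun t : ℝ => t * Real.log t) (Set.Icc b c) := by
      apply ContinuousOn.mul continuousOn_id
      apply Real.continuousOn_log.mono
      intro t ht
      simp only [Set.mem_compl_iff, Set.mem_singleton_iff]
      exact (lt_of_lt_of_le hb ht.1).ne'
    fun_prop
  have hanti : AntitoneOn F (Set.Icc b c) := by
    apply antitoneOn_of_deriv_nonpos (convex_Icc b c) hcont
    · intro t ht
      rw [interior_Icc] at ht
      exact (hderiv t ht).differentiableAt.differentiableWithinAt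
    · intro t ht
      rw [interior_Icc] at ht
      rw [(hderiv t ht).deriv]
      have ht0 : (0:ℝ) < t := lt_trans hb ht.1
      have h1 : Real.log (t / c) ≤ t / c - 1 := Real.log_le_sub_one_of_pos (by positivity)
      rw [Real.log_div ht0.ne' hc.ne'] at h1
      have : (c - t) / c = 1 - t / c := by field_simp
      linarith
  have hFc : F c = 0 := by simp [hF]
  have := hanti (Set.left_mem_Icc.2 hbc) (Set.right_mem_Icc.2 hbc) hbc
  rw [hFc] at this
  have hlog : b * Real.log b - b * Real.log c = b * Real.log (b / c) := by
    rw [Real.log_div hb.ne' hc.ne']; ring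
  simp only [hF] at this
  linarith [this, hlog.symm.le]

-- auxiliary, assuming a ≤ b
lemma pair_aux {a b : ℝ} (ha : 0 ≤ a) (hab : a ≤ b) (hs : 0 < a + b) :
    (a - b) ^ 2 / (4 * (a + b)) ≤
      a * Real.log (2 * a / (a + b)) + b * Real.log (2 * b / (a + b)) := by
  set c : ℝ := (a + b) / 2 with hc
  have hc0 : 0 < c := by positivity
  have hb0 : 0 < b := by nlinarith
  have hra : 2 * a / (a + b) = a / c := by rw [hc]; field_simp
  have hrb : 2 * b / (a + b) = b / c := by rw [hc]; field_simp
  rw [hra, hrb]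
  have hgb : b - c ≤ b * Real.log (b / c) := gibbs' hb0.le hc0
  have hkey : (c - a) ^ 2 / (2 * c) = (a - b) ^ 2 / (4 * (a + b)) := by
    rw [hc]; field_simp; ring
  rcases eq_or_lt_of_le ha with h0 | ha0
  · have ha0 : a = 0 := h0.symm
    subst ha0
    have h2 : b / c = 2 := by rw [hc]; field_simp; ring
    have hq : ((0:ℝ) - b) ^ 2 / (4 * (0 + b)) = b / 4 := by
      field_simp
      ring
    rw [hq, h2]
    have hlog2 : (0.6931471803 : ℝ) < Real.log 2 := Real.log_two_gt_d9
    nlinarith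
  · have hla := log_ineq_low ha0 (by nlinarith : a ≤ c)
    linarith [hla, hgb, hkey.symm.le]

lemma pair_ineq {a b : ℝ} (ha : 0 ≤ a) (hb : 0 ≤ b) :
    (a - b) ^ 2 / (4 * (a + b)) ≤
      a * Real.log (2 * a / (a + b)) + b * Real.log (2 * b / (a + b)) := by
  rcases eq_or_lt_of_le (by positivity : (0:ℝ) ≤ a + b) with h0 | hs
  · have ha0 : a = 0 := by linarith
    have hb0 : b = 0 := by linarith
    simp [ha0, hb0]
  · rcases le_total a b with h | h
    · exact pair_aux ha h hs
    · have := pair_aux hb h (by linarith)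
      calc (a - b) ^ 2 / (4 * (a + b)) = (b - a) ^ 2 / (4 * (b + a)) := by ring_nf
        _ ≤ b * Real.log (2 * b / (b + a)) + a * Real.log (2 * a / (b + a)) := this
        _ = a * Real.log (2 * a / (a + b)) + b * Real.log (2 * b / (a + b)) := by
            rw [add_comm b a]; ring

lemma pair_logb {a b : ℝ} (ha : 0 ≤ a) (hb : 0 ≤ b) :
    (a - b) ^ 2 / (4 * (a + b)) ≤
      a * (1 - Real.logb 2 ((a + b) / a)) + b * (1 - Real.logb 2 ((a + b) / b)) := by
  rcases eq_or_lt_of_le (by positivity : (0:ℝ) ≤ a + b) with h0 | hs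
  · have ha0 : a = 0 := by linarith
    have hb0 : b = 0 := by linarith
    simp [ha0, hb0]
  · have key : ∀ t : ℝ, 0 ≤ t → t * (1 - Real.logb 2 ((a + b) / t))
        = t * Real.log (2 * t / (a + b)) / Real.log 2 := by
      intro t ht
      rcases eq_or_lt_of_le ht with h0 | ht0
      · simp [← h0]
      · have h1 : (1 : ℝ) - Real.logb 2 ((a + b) / t) = Real.logb 2 (2 * t / (a + b)) := by
          rw [show (1:ℝ) = Real.logb 2 2 by simp, ← Real.logb_div (by norm_num) (by positivity : ((a+b)/t : ℝ) ≠ 0)]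
          congr 1
          field_simp
        rw [h1, Real.logb]
        exact (mul_div_assoc _ _ _).symm
    rw [key a ha, key b hb]
    have hlog2 : (0.6931471803 : ℝ) < Real.log 2 := Real.log_two_gt_d9
    have hlog2' : Real.log 2 < 1 := by
      have := Real.log_two_lt_d9; linarith
    have hmain := pair_ineq ha hb
    have hnn : (0:ℝ) ≤ (a - b) ^ 2 / (4 * (a + b)) := by positivity
    have hsum : (a - b) ^ 2 / (4 * (a + b)) ≤
        (a * Real.log (2 * a / (a + b)) + b * Real.log (2 * b / (a + b))) / Real.log 2 := by
      rw [le_div_iff₀ (by linarith)]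
      nlinarith
    calc (a - b) ^ 2 / (4 * (a + b)) ≤ _ := hsum
      _ = _ := by ring

lemma flip_apply_self {n : ℕ} (i : Fin n) (x : Fin n → Bool) : flipBit i x i = !(x i) := by
  simp [flipBit]

lemma flipBit_flipBit {n : ℕ} (i : Fin n) (x : Fin n → Bool) : flipBit i (flipBit i x) = x := by
  funext j
  by_cases hj : j = i
  · subst hj; simp [flipBit]
  · simp [flipBit, Function.update_apply, hj]

lemma hw_flip_false {n : ℕ} (i : Fin n) (x : Fin n → Bool) (hx : x i = false) :
    hw n (flipBit i x) = hw n x + 1 := by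
  have hset : (Finset.univ.filter (fun j => flipBit i x j = true))
      = insert i (Finset.univ.filter (fun j => x j = true)) := by
    ext j
    by_cases hj : j = i
    · subst hj; simp [flipBit, hx]
    · simp [flipBit, Function.update_apply, hj]
  have hnot : i ∉ Finset.univ.filter (fun j => x j = true) := by simp [hx]
  rw [hw, hset, Finset.card_insert_of_notMem hnot, hw]
lemma hw_le {n : ℕ} (x : Fin n → Bool) : hw n x ≤ n := by
  simpa [hw] using Finset.card_filter_le Finset.univ (fun i => x i = true)

lemma comb {n m q : ℕ} (i : Fin n) (g : Fin m → (Fin n → Bool) → Bool)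
    (h : (Fin m → Bool) → ℕ)
    (hhw : ∀ x, hw n x = h (fun j => g j x))
    (hq : Nat.card {j : Fin m // DependsOnCoord (g j) i} ≤ q) :
    (2:ℤ)^n ≤ 2^q * ∑ v : Fin m → Bool,
      |(((Finset.univ.filter (fun x : Fin n → Bool => x i = false ∧ (fun j => g j x) = v)).card : ℤ)
        - ((Finset.univ.filter (fun x : Fin n → Bool => x i = true ∧ (fun j => g j x) = v)).card : ℤ))| := by
  classical
  set B : (Fin n → Bool) → (Fin m → Bool) := fun x => fun j => g j x with hB
  set D : Finset (Fin m) := Finset.univ.filter (fun j => DependsOnCoord (g j) i) with hDdef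
  have hDq : D.card ≤ q := by
    refine le_trans (le_of_eq ?_) hq
    rw [Nat.card_eq_fintype_card, Fintype.card_subtype]
  set prj : (Fin m → Bool) → (Fin m → Bool) := fun v => fun j => if j ∈ D then false else v j
    with hprj
  -- functions not in D do not change under flipping
  have hflip_out : ∀ x, prj (B (flipBit i x)) = prj (B x) := by
    intro x
    funext j
    by_cases hj : j ∈ D
    · simp [hprj, hj]
    · have : ¬ DependsOnCoord (g j) i := by
        intro hd; exact hj (by simp [hDdef, hd])
      rw [DependsOnCoord] at this
      push_neg at this
      simp [hprj, hj, hB, (this x).symm]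
  set S0 : Finset (Fin n → Bool) := Finset.univ.filter (fun x => x i = false) with hS0
  set Na : (Fin m → Bool) → ℕ :=
    fun v => (Finset.univ.filter (fun x : Fin n → Bool => x i = false ∧ B x = v)).card with hNa
  set Nb : (Fin m → Bool) → ℕ :=
    fun v => (Finset.univ.filter (fun x : Fin n → Bool => x i = true ∧ B x = v)).card with hNb
  -- Nb via flipping
  have hNb' : ∀ v, Nb v = (Finset.univ.filter
      (fun x : Fin n → Bool => x i = false ∧ B (flipBit i x) = v)).card := by
    intro v
    apply Finset.card_bij' (fun x _ => flipBit i x) (fun x _ => flipBit i x)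
    · intro x hx
      simp only [Finset.mem_filter, Finset.mem_univ, true_and] at hx ⊢
      rw [flip_apply_self, hx.1, flipBit_flipBit]
      exact ⟨rfl, hx.2⟩
    · intro x hx
      simp only [Finset.mem_filter, Finset.mem_univ, true_and] at hx ⊢
      rw [flip_apply_self, hx.1]
      exact ⟨rfl, hx.2⟩
    · intro x _; exact flipBit_flipBit i x
    · intro x _; exact flipBit_flipBit i x
    -- main per-fiber estimate
  have main : ∀ y : Fin m → Bool,
      2 * ((S0.filter (fun x => prj (B x) = y)).card : ℤ)
        ≤ 2^q * ∑ v ∈ Finset.univ.filter (fun v => prj v = y),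
            |((Na v : ℤ) - (Nb v : ℤ))| := by
    intro y
    set Fy : Finset (Fin n → Bool) := S0.filter (fun x => prj (B x) = y) with hFy
    set mc : ℕ → ℕ := fun w => (Fy.filter (fun x => hw n x = w)).card with hmc
    set P : ℕ → ℤ := fun w => match w with | 0 => 0 | w+1 => (mc w : ℤ) with hP
    set classW : ℕ → Finset (Fin m → Bool) :=
      fun w => Finset.univ.filter (fun v => prj v = y ∧ h v = w) with hclassW
    have claimA : ∀ w, ∑ v ∈ classW w, (Na v) = mc w := by
      intro w
      set s : Finset (Fin n → Bool) := Finset.univ.filter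
        (fun x => x i = false ∧ prj (B x) = y ∧ h (B x) = w) with hs
      have hmap : ∀ x ∈ s, B x ∈ classW w := by
        intro x hx
        simp only [hs, Finset.mem_filter, Finset.mem_univ, true_and] at hx
        simp only [hclassW, Finset.mem_filter, Finset.mem_univ, true_and]
        exact ⟨hx.2.1, hx.2.2⟩
      have h1 := Finset.card_eq_sum_card_fiberwise hmap
      have h2 : ∀ v ∈ classW w, (s.filter (fun x => B x = v)).card = Na v := by
        intro v hv
        simp only [hclassW, Finset.mem_filter, Finset.mem_univ, true_and] at hv
        have : s.filter (fun x => B x = v)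
            = Finset.univ.filter (fun x => x i = false ∧ B x = v) := by
          ext x
          simp only [hs, Finset.mem_filter, Finset.mem_univ, true_and]
          constructor
          · rintro ⟨⟨ha, _, _⟩, hb⟩; exact ⟨ha, hb⟩
          · rintro ⟨ha, hb⟩
            exact ⟨⟨ha, by rw [hb]; exact hv.1, by rw [hb]; exact hv.2⟩, hb⟩
        rw [this]
      have h3 : s = Fy.filter (fun x => hw n x = w) := by
        ext x
        simp only [hs, hFy, hS0, Finset.mem_filter, Finset.mem_univ, true_and]
        rw [← hhw x]
        tauto
      rw [← Finset.sum_congr rfl h2, ← h1, h3, hmc]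
    have claimB : ∀ w, ∑ v ∈ classW w, (Nb v) = (P w).toNat := by
      intro w
      set s : Finset (Fin n → Bool) := Finset.univ.filter
        (fun x => x i = false ∧ prj (B (flipBit i x)) = y ∧ h (B (flipBit i x)) = w) with hs
      have hmap : ∀ x ∈ s, B (flipBit i x) ∈ classW w := by
        intro x hx
        simp only [hs, Finset.mem_filter, Finset.mem_univ, true_and] at hx
        simp only [hclassW, Finset.mem_filter, Finset.mem_univ, true_and]
        exact ⟨hx.2.1, hx.2.2⟩
      have h1 := Finset.card_eq_sum_card_fiberwise hmap
      have h2 : ∀ v ∈ classW w, (s.filter (fun x => B (flipBit i x) = v)).card = Nb v := by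
        intro v hv
        simp only [hclassW, Finset.mem_filter, Finset.mem_univ, true_and] at hv
        have heq : s.filter (fun x => B (flipBit i x) = v)
            = Finset.univ.filter (fun x => x i = false ∧ B (flipBit i x) = v) := by
          ext x
          simp only [hs, Finset.mem_filter, Finset.mem_univ, true_and]
          constructor
          · rintro ⟨⟨ha, _, _⟩, hb⟩; exact ⟨ha, hb⟩
          · rintro ⟨ha, hb⟩
            exact ⟨⟨ha, by rw [hb]; exact hv.1, by rw [hb]; exact hv.2⟩, hb⟩
        rw [heq, hNb' v]
      have h3 : s = Fy.filter (fun x => hw n x + 1 = w) := by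
        ext x
        simp only [hs, hFy, hS0, Finset.mem_filter, Finset.mem_univ, true_and]
        constructor
        · rintro ⟨ha, hb, hc⟩
          refine ⟨⟨ha, by rw [← hflip_out x]; exact hb⟩, ?_⟩
          rw [← hc, ← hhw (flipBit i x), hw_flip_false i x ha]
        · rintro ⟨⟨ha, hb⟩, hc⟩
          refine ⟨ha, by rw [hflip_out x]; exact hb, ?_⟩
          rw [← hhw (flipBit i x), hw_flip_false i x ha, hc]
      rw [← Finset.sum_congr rfl h2, ← h1, h3]
      cases w with
      | zero =>
        have : Fy.filter (fun x => hw n x + 1 = 0) = ∅ := by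
          ext x; simp
        simp [this, hP]
      | succ u =>
        have : Fy.filter (fun x => hw n x + 1 = u + 1) = Fy.filter (fun x => hw n x = u) := by
          ext x
          simp only [Finset.mem_filter, Nat.add_right_cancel_iff]
        rw [this, hP]
        simp [hmc]
    have claimAB : ∀ w, ∑ v ∈ classW w, ((Na v : ℤ) - (Nb v : ℤ)) = P (w+1) - P w := by
      intro w
      have hPnn : 0 ≤ P w := by
        cases w <;> simp [hP]
      rw [Finset.sum_sub_distrib]
      rw [← Nat.cast_sum, ← Nat.cast_sum, claimA w, claimB w]
      have : ((P w).toNat : ℤ) = P w := Int.toNat_of_nonneg hPnn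
      rw [this, hP]
    -- telescoping facts
    have hmc_top : mc (n+1) = 0 := by
      rw [hmc, Finset.card_eq_zero]
      ext x
      simp only [Finset.mem_filter, Finset.notMem_empty, iff_false, not_and]
      intro _
      have := hw_le x
      omega
    have tel : ∀ k, ∑ w ∈ Finset.range k, (P (w+1) - P w) = P k := by
      intro k
      rw [Finset.sum_range_sub P]
      simp [hP]
    rcases Fy.eq_empty_or_nonempty with hFe | hFne
    · rw [hFe]
      simp only [Finset.card_empty, Nat.cast_zero, mul_zero]
      positivity
    · -- fiber decomposition of Fy by weight
      have hsum_mc : ∑ w ∈ Finset.range (n+1), mc w = Fy.card := by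
        rw [hmc]
        exact (Finset.card_eq_sum_card_fiberwise
          (fun x _ => Finset.mem_range.2 (Nat.lt_succ_of_le (hw_le x)))).symm
      set T : Finset ℕ := (Finset.range (n+1)).filter (fun w => mc w ≠ 0) with hT
      have hsum_T : ∑ w ∈ T, mc w = Fy.card := by
        rw [← hsum_mc, hT]
        exact Finset.sum_filter_ne_zero _
      have hTsub : T ⊆ Finset.image h (Finset.univ.filter (fun v => prj v = y)) := by
        intro w hwT
        simp only [hT, Finset.mem_filter, Finset.mem_range] at hwT
        obtain ⟨x, hx⟩ := Finset.card_pos.1 (Nat.pos_of_ne_zero hwT.2)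
        simp only [hFy, hS0, Finset.mem_filter, Finset.mem_univ, true_and] at hx
        refine Finset.mem_image.2 ⟨B x, ?_, ?_⟩
        · simp only [Finset.mem_filter, Finset.mem_univ, true_and]
          exact hx.1.2
        · rw [← hhw x]; exact hx.2
      have hclasscard : (Finset.univ.filter (fun v : Fin m → Bool => prj v = y)).card ≤ 2^q := by
        have hle1 : (Finset.univ.filter (fun v : Fin m → Bool => prj v = y)).card
            ≤ (Finset.univ : Finset ({j // j ∈ D} → Bool)).card := by
          apply Finset.card_le_card_of_injOn (fun v => fun j : {j // j ∈ D} => v j.1)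
          · intro v _; exact Finset.mem_univ _
          · intro v hv v' hv' hvv
            simp only [Finset.coe_filter, Set.mem_setOf_eq, Finset.mem_univ, true_and] at hv hv'
            funext j
            by_cases hj : j ∈ D
            · exact congrFun hvv ⟨j, hj⟩
            · have e1 : prj v j = v j := by simp [hprj, hj]
              have e2 : prj v' j = v' j := by simp [hprj, hj]
              rw [← e1, ← e2, hv, hv']
        refine le_trans hle1 ?_
        have hcf : (Finset.univ : Finset ({j // j ∈ D} → Bool)).card = 2 ^ D.card := by
          rw [Finset.card_univ]
          simp [Fintype.card_fun, Fintype.card_coe]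
        rw [hcf]
        exact Nat.pow_le_pow_right (by norm_num) hDq
      have hTcard : T.card ≤ 2^q :=
        le_trans (Finset.card_le_card hTsub) (le_trans Finset.card_image_le hclasscard)
      have hTne : T.Nonempty := by
        rcases Finset.eq_empty_or_nonempty T with hTe | hTne
        · exfalso
          rw [hTe, Finset.sum_empty] at hsum_T
          exact (Finset.card_pos.2 hFne).ne' hsum_T.symm
        · exact hTne
      obtain ⟨ws, hwsT, hwsmax⟩ := Finset.exists_max_image T mc hTne
      have hws_le : ws ≤ n := by
        have := (Finset.mem_filter.1 hwsT).1
        have := Finset.mem_range.1 this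
        omega
      have hFyle : Fy.card ≤ 2^q * mc ws := by
        calc Fy.card = ∑ w ∈ T, mc w := hsum_T.symm
          _ ≤ ∑ w ∈ T, mc ws := Finset.sum_le_sum (fun w hw' => hwsmax w hw')
          _ = T.card * mc ws := by rw [Finset.sum_const, smul_eq_mul]
          _ ≤ 2^q * mc ws := Nat.mul_le_mul_right _ hTcard
      have hpath : 2 * (mc ws : ℤ) ≤ ∑ w ∈ Finset.range (n+2), |P (w+1) - P w| := by
        have hsplit : ∑ w ∈ Finset.range (ws+1), |P (w+1) - P w|
            + ∑ w ∈ Finset.Ico (ws+1) (n+2), |P (w+1) - P w|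
            = ∑ w ∈ Finset.range (n+2), |P (w+1) - P w| :=
          Finset.sum_range_add_sum_Ico _ (by omega)
        have h1 : (mc ws : ℤ) ≤ ∑ w ∈ Finset.range (ws+1), |P (w+1) - P w| := by
          have habs := Finset.abs_sum_le_sum_abs (fun w => P (w+1) - P w) (Finset.range (ws+1))
          rw [tel (ws+1)] at habs
          have hPval : P (ws+1) = (mc ws : ℤ) := rfl
          calc (mc ws : ℤ) = |P (ws+1)| := by rw [hPval, abs_of_nonneg (by positivity)]
            _ ≤ _ := habs
        have h2 : (mc ws : ℤ) ≤ ∑ w ∈ Finset.Ico (ws+1) (n+2), |P (w+1) - P w| := by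
          have habs := Finset.abs_sum_le_sum_abs (fun w => P (w+1) - P w) (Finset.Ico (ws+1) (n+2))
          have hsub : ∑ w ∈ Finset.Ico (ws+1) (n+2), (P (w+1) - P w)
              = P (n+2) - P (ws+1) := by
            rw [Finset.sum_Ico_eq_sub _ (by omega : ws+1 ≤ n+2), tel (n+2), tel (ws+1)]
          rw [hsub] at habs
          have hPtop : P (n+2) = 0 := by
            show ((mc (n+1) : ℤ)) = 0
            rw [hmc_top]; rfl
          have hPval : P (ws+1) = (mc ws : ℤ) := rfl
          rw [hPtop, hPval] at habs
          calc (mc ws : ℤ) = |0 - (mc ws : ℤ)| := by simp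
            _ ≤ _ := habs
        linarith
      have hclasssum : ∑ w ∈ Finset.range (n+2), |P (w+1) - P w|
          ≤ ∑ v ∈ Finset.univ.filter (fun v => prj v = y), |((Na v : ℤ) - (Nb v : ℤ))| := by
        have hstep1 : ∀ w ∈ Finset.range (n+2), |P (w+1) - P w|
            ≤ ∑ v ∈ classW w, |((Na v : ℤ) - (Nb v : ℤ))| := by
          intro w _
          rw [← claimAB w]
          exact Finset.abs_sum_le_sum_abs _ _
        have hdisj : ∀ w ∈ Finset.range (n+2), ∀ w' ∈ Finset.range (n+2), w ≠ w' →
            Disjoint (classW w) (classW w') := by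
          intro w _ w' _ hww
          apply Finset.disjoint_left.2
          intro v hv hv'
          simp only [hclassW, Finset.mem_filter, Finset.mem_univ, true_and] at hv hv'
          exact hww (by rw [← hv.2, hv'.2])
        calc ∑ w ∈ Finset.range (n+2), |P (w+1) - P w|
            ≤ ∑ w ∈ Finset.range (n+2), ∑ v ∈ classW w, |((Na v : ℤ) - (Nb v : ℤ))| :=
              Finset.sum_le_sum hstep1
          _ = ∑ v ∈ (Finset.range (n+2)).biUnion classW, |((Na v : ℤ) - (Nb v : ℤ))| :=
              (Finset.sum_biUnion hdisj).symm
          _ ≤ _ := by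
              apply Finset.sum_le_sum_of_subset_of_nonneg
              · intro v hv
                simp only [Finset.mem_biUnion] at hv
                obtain ⟨w, _, hvw⟩ := hv
                simp only [hclassW, Finset.mem_filter, Finset.mem_univ, true_and] at hvw
                simp only [Finset.mem_filter, Finset.mem_univ, true_and]
                exact hvw.1
              · intro v _ _
                positivity
      calc 2 * (Fy.card : ℤ) ≤ ((2 * (2^q * mc ws) : ℕ) : ℤ) := by
            exact_mod_cast Nat.mul_le_mul_left 2 hFyle
        _ = 2^q * (2 * (mc ws : ℤ)) := by push_cast; ring
        _ ≤ 2^q * ∑ w ∈ Finset.range (n+2), |P (w+1) - P w| :=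
            mul_le_mul_of_nonneg_left hpath (by positivity)
        _ ≤ _ := mul_le_mul_of_nonneg_left hclasssum (by positivity)
  -- total assembly
  have htot1 : (S0.card : ℤ) = ∑ y : Fin m → Bool,
      ((S0.filter (fun x => prj (B x) = y)).card : ℤ) := by
    rw [Finset.card_eq_sum_card_fiberwise
      (f := fun x => prj (B x)) (t := Finset.univ) (fun x _ => Finset.mem_univ _)]
    push_cast
    rfl
  have htot2 : ∑ y : Fin m → Bool, ∑ v ∈ Finset.univ.filter (fun v => prj v = y),
      |((Na v : ℤ) - (Nb v : ℤ))| = ∑ v : Fin m → Bool, |((Na v : ℤ) - (Nb v : ℤ))| :=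
    Finset.sum_fiberwise_of_maps_to (fun v _ => Finset.mem_univ _) _
  have hS0card : 2 * S0.card = 2^n := by
    have hsplit := Finset.card_filter_add_card_filter_not
      (s := Finset.univ) (p := fun x : Fin n → Bool => x i = false)
    have hcardU : (Finset.univ : Finset (Fin n → Bool)).card = 2^n := by
      rw [Finset.card_univ]
      simp
    have hbij : (Finset.univ.filter (fun x : Fin n → Bool => ¬ (x i = false))).card
        = (Finset.univ.filter (fun x : Fin n → Bool => x i = false)).card := by
      apply Finset.card_bij' (fun x _ => flipBit i x) (fun x _ => flipBit i x)
      · intro x hx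
        simp only [Finset.mem_filter, Finset.mem_univ, true_and] at hx
        simp only [Bool.not_eq_false] at hx
        simp only [Finset.mem_filter, Finset.mem_univ, true_and]
        rw [flip_apply_self, hx]
        rfl
      · intro x hx
        simp only [Finset.mem_filter, Finset.mem_univ, true_and] at hx
        simp only [Finset.mem_filter, Finset.mem_univ, true_and]
        rw [flip_apply_self, hx]
        simp
      · intro x _; exact flipBit_flipBit i x
      · intro x _; exact flipBit_flipBit i x
    rw [hS0]
    rw [hbij, hcardU] at hsplit
    linarith
  calc (2:ℤ)^n = 2 * (S0.card : ℤ) := by exact_mod_cast hS0card.symm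
    _ = ∑ y : Fin m → Bool, 2 * ((S0.filter (fun x => prj (B x) = y)).card : ℤ) := by
        rw [htot1, Finset.mul_sum]
    _ ≤ ∑ y : Fin m → Bool, 2^q * ∑ v ∈ Finset.univ.filter (fun v => prj v = y),
          |((Na v : ℤ) - (Nb v : ℤ))| := Finset.sum_le_sum (fun y _ => main y)
    _ = 2^q * ∑ v : Fin m → Bool, |((Na v : ℤ) - (Nb v : ℤ))| := by
        rw [← Finset.mul_sum, htot2]

end KeyLemmaAux

set_option maxHeartbeats 2000000 in
/-- Key lemma: if `HW_n = h(g_1, …, g_m)` and coordinate `i` is queried by (i.e. at most)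
`q` of the inner functions, then for `X` uniform on `{0,1}^n`,
`I[X_i : (g_1(X), …, g_m(X))] ≥ 2^{-O(q)}`. -/
theorem key_lemma :
    ∃ C : ℝ, 0 < C ∧
      ∀ (n m q : ℕ) (i : Fin n) (g : Fin m → (Fin n → Bool) → Bool)
        (h : (Fin m → Bool) → ℕ),
        (∀ x, hw n x = h (fun j => g j x)) →
        Nat.card {j : Fin m // DependsOnCoord (g j) i} ≤ q →
        (2 : ℝ) ^ (-(C * (q : ℝ))) ≤
          mutInfoU (Finset.univ : Finset (Fin n → Bool))
            (fun x => x i) (fun x => (fun j => g j x)) := by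
  refine ⟨4, by norm_num, ?_⟩
  intro n m q i g h hhw hq
  classical
  -- q ≥ 1
  have hq1 : 1 ≤ q := by
    by_contra hq0
    push_neg at hq0
    have hq' : Nat.card {j : Fin m // DependsOnCoord (g j) i} = 0 := by omega
    have hempty : IsEmpty {j : Fin m // DependsOnCoord (g j) i} := by
      rcases Nat.card_eq_zero.1 hq' with h1 | h1
      · exact h1
      · exact absurd h1 (not_infinite_iff_finite.2 inferInstance)
    set x0 : Fin n → Bool := fun _ => false with hx0
    have h1 : hw n x0 = 0 := by simp [hw, hx0]
    have h2 : hw n (flipBit i x0) = 1 := by rw [hw_flip_false i x0 rfl, h1]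
    have h3 : (fun j => g j x0) = (fun j => g j (flipBit i x0)) := by
      funext j
      by_contra hne
      exact hempty.false ⟨j, ⟨x0, hne⟩⟩
    have e1 := hhw x0
    have e2 := hhw (flipBit i x0)
    rw [← h3] at e2
    omega
  set A : (Fin n → Bool) → Bool := fun x => x i with hA
  set Bf : (Fin n → Bool) → (Fin m → Bool) := fun x => fun j => g j x with hBf
  set Na : (Fin m → Bool) → ℕ :=
    fun v => (Finset.univ.filter (fun ω : Fin n → Bool => A ω = false ∧ Bf ω = v)).card with hNa
  set Nb : (Fin m → Bool) → ℕ :=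
    fun v => (Finset.univ.filter (fun ω : Fin n → Bool => A ω = true ∧ Bf ω = v)).card with hNb
  set Nt : (Fin m → Bool) → ℕ :=
    fun v => (Finset.univ.filter (fun ω : Fin n → Bool => Bf ω = v)).card with hNt
  have hcardU : (Finset.univ : Finset (Fin n → Bool)).card = 2^n := by
    rw [Finset.card_univ]; simp
  -- Nt = Na + Nb
  have hsplit : ∀ v, Nt v = Na v + Nb v := by
    intro v
    have h1 := Finset.card_filter_add_card_filter_not
      (s := Finset.univ.filter (fun ω : Fin n → Bool => Bf ω = v))
      (p := fun ω => A ω = false)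
    have e1 : (Finset.univ.filter (fun ω : Fin n → Bool => Bf ω = v)).filter
        (fun ω => A ω = false)
        = Finset.univ.filter (fun ω : Fin n → Bool => A ω = false ∧ Bf ω = v) := by
      ext x; simp only [Finset.mem_filter, Finset.mem_univ, true_and]; tauto
    have e2 : (Finset.univ.filter (fun ω : Fin n → Bool => Bf ω = v)).filter
        (fun ω => ¬ (A ω = false))
        = Finset.univ.filter (fun ω : Fin n → Bool => A ω = true ∧ Bf ω = v) := by
      ext x
      simp only [Finset.mem_filter, Finset.mem_univ, true_and, Bool.not_eq_false]
      tauto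
    rw [e1, e2] at h1
    exact h1.symm
  -- marginals
  have hmargA : ∑ v : Fin m → Bool, Na v
      = (Finset.univ.filter (fun ω : Fin n → Bool => A ω = false)).card := by
    rw [Finset.card_eq_sum_card_fiberwise
      (f := Bf) (t := Finset.univ) (fun x _ => Finset.mem_univ _)]
    apply Finset.sum_congr rfl
    intro v _
    simp only [hNa]
    congr 1
    ext x
    simp only [Finset.mem_filter, Finset.mem_univ, true_and]
  have hmargB : ∑ v : Fin m → Bool, Nb v
      = (Finset.univ.filter (fun ω : Fin n → Bool => A ω = true)).card := by
    rw [Finset.card_eq_sum_card_fiberwise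
      (f := Bf) (t := Finset.univ) (fun x _ => Finset.mem_univ _)]
    apply Finset.sum_congr rfl
    intro v _
    simp only [hNb]
    congr 1
    ext x
    simp only [Finset.mem_filter, Finset.mem_univ, true_and]
  -- the two halves have equal size 2^(n-1)
  have hbijhalf : (Finset.univ.filter (fun ω : Fin n → Bool => A ω = true)).card
      = (Finset.univ.filter (fun ω : Fin n → Bool => A ω = false)).card := by
    apply Finset.card_bij' (fun x _ => flipBit i x) (fun x _ => flipBit i x)
    · intro x hx
      simp only [Finset.mem_filter, Finset.mem_univ, true_and, hA] at hx ⊢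
      rw [flip_apply_self, hx]; rfl
    · intro x hx
      simp only [Finset.mem_filter, Finset.mem_univ, true_and, hA] at hx ⊢
      rw [flip_apply_self, hx]; rfl
    · intro x _; exact flipBit_flipBit i x
    · intro x _; exact flipBit_flipBit i x
  have hhalfsum : (Finset.univ.filter (fun ω : Fin n → Bool => A ω = false)).card
      + (Finset.univ.filter (fun ω : Fin n → Bool => A ω = true)).card = 2^n := by
    have h1 := Finset.card_filter_add_card_filter_not
      (s := (Finset.univ : Finset (Fin n → Bool))) (p := fun ω => A ω = false)
    have e2 : (Finset.univ.filter (fun ω : Fin n → Bool => ¬ (A ω = false)))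
        = Finset.univ.filter (fun ω : Fin n → Bool => A ω = true) := by
      ext x
      simp only [Finset.mem_filter, Finset.mem_univ, true_and, Bool.not_eq_false]
    rw [e2, hcardU] at h1
    exact h1
  have hhalf : 2 * (Finset.univ.filter (fun ω : Fin n → Bool => A ω = false)).card = 2^n := by
    omega
  -- entropy of A is 1
  have hval : ∀ a : Bool, (((Finset.univ.filter (fun ω : Fin n → Bool => A ω = a)).card : ℝ)
      / ((Finset.univ : Finset (Fin n → Bool)).card : ℝ)) = 1/2 := by
    intro a
    have hcases : (Finset.univ.filter (fun ω : Fin n → Bool => A ω = a)).card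
        = (Finset.univ.filter (fun ω : Fin n → Bool => A ω = false)).card := by
      cases a
      · rfl
      · exact hbijhalf
    rw [hcases, hcardU]
    have h2n : ((2:ℝ))^n ≠ 0 := by positivity
    have : ((Finset.univ.filter (fun ω : Fin n → Bool => A ω = false)).card : ℝ)
        = 2^n / 2 := by
      have := hhalf
      have : (2:ℝ) * ((Finset.univ.filter (fun ω : Fin n → Bool => A ω = false)).card : ℝ)
          = 2^n := by exact_mod_cast congrArg (Nat.cast : ℕ → ℝ) this
      linarith
    rw [this]
    push_cast
    field_simp
  have hent : entU (Finset.univ : Finset (Fin n → Bool)) A = 1 := by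
    rw [entU, Fintype.sum_bool, hval true, hval false]
    norm_num
  -- cast of universe card
  have hN2 : ((Finset.univ : Finset (Fin n → Bool)).card : ℝ) = 2^n := by
    rw [hcardU]; push_cast; ring
  have h2npos : (0:ℝ) < 2^n := by positivity
  have h2qpos : (0:ℝ) < (2:ℝ)^q := by positivity
  -- bridge to the combinatorial lemma
  have hcomb := comb i g h hhw hq
  have hcombR : (2:ℝ)^n ≤ 2^q * ∑ v : Fin m → Bool, |((Na v:ℝ) - (Nb v:ℝ))| := by
    exact_mod_cast hcomb
  -- rewrite of the conditional entropy
  have hcond : condEntU (Finset.univ : Finset (Fin n → Bool)) A Bf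
      = (∑ v : Fin m → Bool, ((Nb v:ℝ)/(2^n:ℝ)) * Real.logb 2 ((Nt v:ℝ)/(Nb v:ℝ)))
        + ∑ v : Fin m → Bool, ((Na v:ℝ)/(2^n:ℝ)) * Real.logb 2 ((Nt v:ℝ)/(Na v:ℝ)) := by
    rw [condEntU, Fintype.sum_bool, hN2]
  -- total probability 1
  have hptot : (∑ v : Fin m → Bool, ((Na v:ℝ)/(2^n:ℝ)))
      + ∑ v : Fin m → Bool, ((Nb v:ℝ)/(2^n:ℝ)) = 1 := by
    rw [← Finset.sum_div, ← Finset.sum_div, ← Nat.cast_sum, ← Nat.cast_sum, hmargA, hmargB]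
    rw [← add_div]
    rw [← Nat.cast_add, hhalfsum]
    push_cast
    field_simp
  -- per-v inequality
  have hkey : ∀ v : Fin m → Bool,
      ((Na v:ℝ) - (Nb v:ℝ))^2 / ((Na v:ℝ) + (Nb v:ℝ)) / (4 * (2^n:ℝ))
        ≤ ((Na v:ℝ)/(2^n:ℝ)) * (1 - Real.logb 2 ((Nt v:ℝ)/(Na v:ℝ)))
          + ((Nb v:ℝ)/(2^n:ℝ)) * (1 - Real.logb 2 ((Nt v:ℝ)/(Nb v:ℝ))) := by
    intro v
    have hNt' : (Nt v : ℝ) = (Na v:ℝ) + (Nb v:ℝ) := by exact_mod_cast hsplit v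
    have hp := pair_logb (Nat.cast_nonneg (Na v)) (Nat.cast_nonneg (Nb v))
    rw [hNt']
    have h4 := (div_le_div_iff_of_pos_right h2npos).2 hp
    calc ((Na v:ℝ) - (Nb v:ℝ))^2 / ((Na v:ℝ) + (Nb v:ℝ)) / (4 * (2^n:ℝ))
        = ((Na v:ℝ) - (Nb v:ℝ))^2 / (4 * ((Na v:ℝ) + (Nb v:ℝ))) / (2^n:ℝ) := by
          rw [div_div, div_div]
          ring_nf
      _ ≤ ((Na v:ℝ) * (1 - Real.logb 2 (((Na v:ℝ) + (Nb v:ℝ))/(Na v:ℝ)))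
            + (Nb v:ℝ) * (1 - Real.logb 2 (((Na v:ℝ) + (Nb v:ℝ))/(Nb v:ℝ)))) / (2^n:ℝ) := h4
      _ = _ := by ring
  -- identity for the mutual information
  rw [mutInfoU, hent, hcond]
  have hMI : (1:ℝ) - ((∑ v : Fin m → Bool, ((Nb v:ℝ)/(2^n:ℝ)) * Real.logb 2 ((Nt v:ℝ)/(Nb v:ℝ)))
        + ∑ v : Fin m → Bool, ((Na v:ℝ)/(2^n:ℝ)) * Real.logb 2 ((Nt v:ℝ)/(Na v:ℝ)))
      = ∑ v : Fin m → Bool,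
          (((Na v:ℝ)/(2^n:ℝ)) * (1 - Real.logb 2 ((Nt v:ℝ)/(Na v:ℝ)))
            + ((Nb v:ℝ)/(2^n:ℝ)) * (1 - Real.logb 2 ((Nt v:ℝ)/(Nb v:ℝ)))) := by
    rw [Finset.sum_add_distrib]
    simp only [mul_one_sub]
    rw [Finset.sum_sub_distrib, Finset.sum_sub_distrib]
    linarith [hptot]
  rw [hMI]
  -- Cauchy-Schwarz
  have hCS : (∑ v : Fin m → Bool, |(Na v:ℝ) - (Nb v:ℝ)|)^2
      ≤ (∑ v : Fin m → Bool, ((Na v:ℝ) - (Nb v:ℝ))^2 / ((Na v:ℝ) + (Nb v:ℝ)))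
        * ∑ v : Fin m → Bool, ((Na v:ℝ) + (Nb v:ℝ)) := by
    apply Finset.sum_sq_le_sum_mul_sum_of_sq_eq_mul
    · intro v _; positivity
    · intro v _; positivity
    · intro v _
      rw [sq_abs]
      rcases eq_or_ne ((Na v:ℝ) + (Nb v:ℝ)) 0 with h0 | h0
      · have hna : (Na v:ℝ) = 0 := by
          linarith [Nat.cast_nonneg (α:=ℝ) (Na v), Nat.cast_nonneg (α:=ℝ) (Nb v)]
        have hnb : (Nb v:ℝ) = 0 := by
          linarith [Nat.cast_nonneg (α:=ℝ) (Na v), Nat.cast_nonneg (α:=ℝ) (Nb v)]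
        rw [hna, hnb]
        norm_num
      · rw [div_mul_cancel₀ _ h0]
  have hstot : ∑ v : Fin m → Bool, ((Na v:ℝ) + (Nb v:ℝ)) = 2^n := by
    have h1 : ∀ v : Fin m → Bool, ((Na v:ℝ) + (Nb v:ℝ)) = ((Nt v : ℕ) : ℝ) := by
      intro v
      rw [hsplit v]
      push_cast
      ring
    rw [Finset.sum_congr rfl (fun v _ => h1 v), ← Nat.cast_sum]
    have h2 : ∑ v : Fin m → Bool, Nt v = 2^n := by
      rw [← hcardU]
      exact (Finset.card_eq_sum_card_fiberwise
        (f := Bf) (t := Finset.univ) (fun x _ => Finset.mem_univ _)).symm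
    rw [h2]
    push_cast
    ring
  -- put everything together
  set Ds : ℝ := ∑ v : Fin m → Bool, |(Na v:ℝ) - (Nb v:ℝ)| with hDs
  set X : ℝ := ∑ v : Fin m → Bool, ((Na v:ℝ) - (Nb v:ℝ))^2 / ((Na v:ℝ) + (Nb v:ℝ)) with hX
  have hDs2 : (2:ℝ)^n / 2^q ≤ Ds := by
    rw [div_le_iff₀ h2qpos]
    linarith [hcombR]
  have hDsnn : (0:ℝ) ≤ (2:ℝ)^n / 2^q := by positivity
  have hX1 : Ds^2 / 2^n ≤ X := by
    rw [div_le_iff₀ h2npos]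
    calc Ds^2 ≤ X * ∑ v : Fin m → Bool, ((Na v:ℝ) + (Nb v:ℝ)) := hCS
      _ = X * 2^n := by rw [hstot]
  have hXlow : ((2:ℝ)^n / 2^q)^2 / 2^n ≤ X := by
    refine le_trans ?_ hX1
    exact (div_le_div_iff_of_pos_right h2npos).2 (pow_le_pow_left₀ hDsnn hDs2 2)
  have hsum_ge : X / (4 * (2^n:ℝ)) ≤ ∑ v : Fin m → Bool,
      (((Na v:ℝ)/(2^n:ℝ)) * (1 - Real.logb 2 ((Nt v:ℝ)/(Na v:ℝ)))
        + ((Nb v:ℝ)/(2^n:ℝ)) * (1 - Real.logb 2 ((Nt v:ℝ)/(Nb v:ℝ)))) := by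
    rw [hX, Finset.sum_div]
    exact Finset.sum_le_sum (fun v _ => hkey v)
  refine le_trans ?_ hsum_ge
  have hXlow2 : (1:ℝ) / (4 * ((2:ℝ)^q)^2) ≤ X / (4 * (2^n:ℝ)) := by
    have e1 : ((2:ℝ)^n / 2^q)^2 / 2^n / (4 * (2^n:ℝ)) = 1 / (4 * ((2:ℝ)^q)^2) := by
      field_simp
    rw [← e1]
    exact (div_le_div_iff_of_pos_right (by positivity)).2 hXlow
  refine le_trans ?_ hXlow2
  -- numeric: 2^(-(4q)) ≤ 1/(4·(2^q)²)
  have hrw : (2:ℝ) ^ (-((4:ℝ) * (q:ℝ))) = ((2:ℝ)^(4*q : ℕ))⁻¹ := by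
    rw [Real.rpow_neg (by norm_num)]
    congr 1
    rw [← Real.rpow_natCast 2 (4*q)]
    congr 1
    push_cast
    ring
  rw [hrw]
  have h4q : (4:ℝ) * ((2:ℝ)^q)^2 ≤ (2:ℝ)^(4*q : ℕ) := by
    have e2 : (2:ℝ)^(4*q : ℕ) = (((2:ℝ)^q)^2)^2 := by
      rw [← pow_mul, ← pow_mul]
      congr 1
      ring
    rw [e2]
    have h2q2 : (4:ℝ) ≤ ((2:ℝ)^q)^2 := by
      have : (2:ℝ) ≤ (2:ℝ)^q := by
        calc (2:ℝ) = 2^1 := (pow_one 2).symm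
          _ ≤ 2^q := pow_le_pow_right₀ (by norm_num) hq1
      nlinarith
    nlinarith [h2qpos]
  rw [one_div]
  exact inv_anti₀ (by positivity) h4q
end

section
/- (Query lower bound for subsets of variables) Suppose HW_n(x) = h(g_1(x), …, g_m(x)) for all x ∈ {0,1}^n, where g_1, …, g_m : {0,1}^n → {0,1} and h : {0,1}^m → {0, …, n}. Then for every set S ⊆ [n] of coordinates, the number of inner functions g_j that depend on at least one coordinate in S is at least log₂(|S| + 1). -/
lemma indep_agree {n : ℕ} (S : Finset (Fin n)) (g : (Fin n → Bool) → Bool)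
    (hg : ∀ i ∈ S, ∀ x, g x = g (flipBit i x)) :
    ∀ (d : ℕ) (x y : Fin n → Bool),
      (Finset.univ.filter (fun i => x i ≠ y i)).card ≤ d →
      (∀ i, i ∉ S → x i = y i) → g x = g y := by
  intro d
  induction d with
  | zero =>
    intro x y hc hout
    have hx : x = y := by
      funext i
      by_contra hne
      have : i ∈ Finset.univ.filter (fun i => x i ≠ y i) := by simp [hne]
      have := Finset.card_pos.mpr ⟨i, this⟩
      omega
    rw [hx]
  | succ d ih =>
    intro x y hc hout
    by_cases hxy : x = y
    · rw [hxy]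
    · have hne : ∃ i, x i ≠ y i := by
        by_contra hno
        push_neg at hno
        exact hxy (funext hno)
      obtain ⟨i, hi⟩ := hne
      have hiS : i ∈ S := by
        by_contra hns
        exact hi (hout i hns)
      have hflip : flipBit i x i = y i := by
        simp only [flipBit, Function.update_self]
        revert hi; cases x i <;> cases y i <;> simp
      have hflipne : ∀ k, k ≠ i → flipBit i x k = x k := by
        intro k hk
        simp [flipBit, Function.update_of_ne hk]
      rw [hg i hiS x]
      apply ih (flipBit i x) y _ _
      · have hsub : Finset.univ.filter (fun k => flipBit i x k ≠ y k) ⊆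
            (Finset.univ.filter (fun k => x k ≠ y k)).erase i := by
          intro k hk
          simp only [Finset.mem_filter, Finset.mem_univ, true_and] at hk
          rcases eq_or_ne k i with rfl | hki
          · exact absurd hflip hk
          · rw [hflipne k hki] at hk
            simp [Finset.mem_erase, hki, hk]
        have hic : i ∈ Finset.univ.filter (fun k => x k ≠ y k) := by simp [hi]
        have := Finset.card_le_card hsub
        rw [Finset.card_erase_of_mem hic] at this
        omega
      · intro k hkS
        have hki : k ≠ i := fun hh => hkS (hh ▸ hiS)
        rw [hflipne k hki]
        exact hout k hkS

/-- Query lower bound for subsets of variables: if `HW_n = h(g_1, …, g_m)`, then for every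
set `S` of coordinates, at least `log₂(|S| + 1)` of the inner functions depend on some
coordinate in `S`. -/
theorem query_lower_bound_subsets (n m : ℕ)
    (g : Fin m → (Fin n → Bool) → Bool) (h : (Fin m → Bool) → ℕ)
    (hcomp : ∀ x, hw n x = h (fun j => g j x)) (S : Finset (Fin n)) :
    Real.logb 2 ((S.card : ℝ) + 1) ≤
      (Nat.card {j : Fin m // ∃ i ∈ S, DependsOnCoord (g j) i} : ℝ) := by
  classical
  have hT : ∀ k : Fin (S.card + 1), ∃ T, T ⊆ S ∧ T.card = (k : ℕ) := by
    intro k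
    obtain ⟨T, hTS, hTc⟩ := Finset.exists_subset_card_eq (s := S) (Nat.lt_succ_iff.mp k.isLt)
    exact ⟨T, hTS, hTc⟩
  choose T hTS hTc using hT
  set xk : Fin (S.card + 1) → Fin n → Bool := fun k i => decide (i ∈ T k) with hxk
  have hwxk : ∀ k, hw n (xk k) = (k : ℕ) := by
    intro k
    rw [← hTc k]
    unfold hw
    congr 1
    ext i
    simp [hxk]
  have hconst : ∀ j, (¬ ∃ i ∈ S, DependsOnCoord (g j) i) → ∀ k k', g j (xk k) = g j (xk k') := by
    intro j hj k k'
    push_neg at hj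
    simp only [DependsOnCoord, not_exists, not_not] at hj
    apply indep_agree S (g j) (fun i hi x => hj i hi x)
      (Finset.univ.filter (fun i => xk k i ≠ xk k' i)).card (xk k) (xk k') le_rfl
    intro i hiS
    have h1 : i ∉ T k := fun hh => hiS (hTS k hh)
    have h2 : i ∉ T k' := fun hh => hiS (hTS k' hh)
    simp [hxk, h1, h2]
  set φ : Fin (S.card + 1) → ({j : Fin m // ∃ i ∈ S, DependsOnCoord (g j) i} → Bool) :=
    fun k j => g j.1 (xk k) with hφ
  have hinj : Function.Injective φ := by
    intro k k' hkk
    have hfun : (fun j => g j (xk k)) = (fun j => g j (xk k')) := by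
      funext j
      by_cases hj : ∃ i ∈ S, DependsOnCoord (g j) i
      · exact congrFun hkk ⟨j, hj⟩
      · exact hconst j hj k k'
    have h1 : hw n (xk k) = hw n (xk k') := by rw [hcomp, hcomp, hfun]
    have h2 : (k : ℕ) = (k' : ℕ) := by rw [← hwxk k, ← hwxk k', h1]
    exact Fin.ext h2
  have hcard : S.card + 1 ≤ 2 ^ Nat.card {j : Fin m // ∃ i ∈ S, DependsOnCoord (g j) i} := by
    have := Fintype.card_le_of_injective φ hinj
    simpa [Nat.card_eq_fintype_card, Fintype.card_fun] using this
  have hpos : (0 : ℝ) < (S.card : ℝ) + 1 := by positivity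
  calc Real.logb 2 ((S.card : ℝ) + 1)
      ≤ Real.logb 2 ((2 : ℝ) ^ Nat.card {j : Fin m // ∃ i ∈ S, DependsOnCoord (g j) i}) := by
        apply Real.logb_le_logb_of_le (by norm_num : (1:ℝ) < 2) hpos
        calc ((S.card : ℝ) + 1) = ((S.card + 1 : ℕ) : ℝ) := by push_cast; ring
        _ ≤ (((2 : ℕ) ^ Nat.card {j : Fin m // ∃ i ∈ S, DependsOnCoord (g j) i} : ℕ) : ℝ) := by
            exact_mod_cast hcard
        _ = (2 : ℝ) ^ Nat.card {j : Fin m // ∃ i ∈ S, DependsOnCoord (g j) i} := by push_cast; ring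
    _ = (Nat.card {j : Fin m // ∃ i ∈ S, DependsOnCoord (g j) i} : ℝ) := by
        rw [Real.logb_pow, Real.logb_self_eq_one (by norm_num)]
        ring
end
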